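/- arXiv:2407.15721 — 5 statements merged into one kernel-verified Lean document; each statement's English description precedes it below -/
import Mathlib

section
/- Let Γ_f = {0,…,n_f−1} and Γ_g = {0,…,n_g−1} be finite alphabets, f : Γ_f → Γ_f⁺ and g : Γ_g → Γ_g⁺ morphisms such that f(0) and g(0) both start with the letter 0 and have length greater than 1, and let τ : Γ_f → Σ and ρ : Γ_g → Σ be codings into a common alphabet Σ. Suppose that for some n > 0 there are nonempty words u_0,…,u_{n−1} over Γ_f, nonempty words v_0,…,v_{n−1} over Γ_g, and words w_0,…,w_{n−1} over {0,1,…,n−1}, written w_i = w_{i,0} w_{i,1} ⋯ w_{i,k_i−1} with k_i = |w_i|, such that for every i = 0,…,n−1: (a) τ(u_i) = ρ(v_i); (b) f(u_i) = u_{w_{i,0}} u_{w_{i,1}} ⋯ u_{w_{i,k_i−1}}; and (c) g(v_i) = v_{w_{i,0}} v_{w_{i,1}} ⋯ v_{w_{i,k_i−1}}. Suppose moreover that both u_0 and v_0 start with the letter 0. Then τ(f^∞(0)) = ρ(g^∞(0)). -/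
/-!
Iterating the simultaneous substitution shows that `f^k(u₀)` and `g^k(v₀)` are the images under
`u` and `v` of one and the same word `w^k(0)`, so by (a) they have the same image under the
codings. Since `u₀` starts with `0`, the word `f^(m+1)(0)` is a prefix of `f^(m+1)(u₀)`, and it
is long enough to contain the `m`-th letter of `f^∞(0)`; likewise for `g`.
-/

def applyW {Γ : Type*} (f : Γ → List Γ) (w : List Γ) : List Γ := w.flatMap f

/-- A morphism applied to an infinite sequence, by concatenation
(meaningful when every `f a` is nonempty: then the `n`-th letter of
`f(σ(0))f(σ(1))⋯` lies within the first `n+1` blocks). -/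
def applyS {Γ : Type*} (f : Γ → List Γ) (σ : ℕ → Γ) (n : ℕ) : Γ :=
  ((List.range (n + 1)).flatMap fun i => f (σ i)).getD n (σ 0)

def applyC {Γ S : Type*} (τ : Γ → S) (σ : ℕ → Γ) : ℕ → S := fun n => τ (σ n)

/-- The fixed point `f^∞(a)` of a morphism `f` with `f a = a·u`, `u` nonempty:
its `n`-th letter is the `n`-th letter of `f^(n+1)(a)` (which has length `> n`). -/
def fixpt {Γ : Type*} (f : Γ → List Γ) (a : Γ) (n : ℕ) : Γ :=
  ((applyW f)^[n + 1] [a]).getD n a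

section Morphism

variable {Γ : Type*} (f : Γ → List Γ)

lemma applyW_append (l₁ l₂ : List Γ) : applyW f (l₁ ++ l₂) = applyW f l₁ ++ applyW f l₂ :=
  List.flatMap_append

lemma iterate_applyW_append (k : ℕ) (l₁ l₂ : List Γ) :
    (applyW f)^[k] (l₁ ++ l₂) = (applyW f)^[k] l₁ ++ (applyW f)^[k] l₂ := by
  induction k generalizing l₁ l₂ with
  | zero => rfl
  | succ k ih => simp only [Function.iterate_succ_apply, applyW_append, ih]

variable {f}

lemma length_le_length_applyW (hf : ∀ a, f a ≠ []) (l : List Γ) :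
    l.length ≤ (applyW f l).length := by
  induction l with
  | nil => simp
  | cons a t ih =>
    simp only [applyW, List.flatMap_cons, List.length_append, List.length_cons] at ih ⊢
    have := List.length_pos_iff.mpr (hf a)
    omega

lemma length_le_length_iterate_applyW (hf : ∀ a, f a ≠ []) (k : ℕ) (l : List Γ) :
    l.length ≤ ((applyW f)^[k] l).length := by
  induction k generalizing l with
  | zero => rfl
  | succ k ih => exact (length_le_length_applyW hf l).trans (ih (applyW f l))

lemma lt_length_iterate_applyW (hf : ∀ a, f a ≠ []) {a : Γ} (ha : (f a).head? = some a)
    (hlen : 1 < (f a).length) (k : ℕ) : k < ((applyW f)^[k] [a]).length := by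
  obtain ⟨s, hs⟩ := List.head?_eq_some_iff.mp ha
  have hs_pos : 0 < s.length := by simp [hs] at hlen; omega
  induction k with
  | zero => simp
  | succ k ih =>
    have hstep : (applyW f)^[k + 1] [a] = (applyW f)^[k] [a] ++ (applyW f)^[k] s := by
      rw [Function.iterate_succ_apply, applyW, List.flatMap_singleton, hs,
        ← List.singleton_append, iterate_applyW_append]
    have := length_le_length_iterate_applyW hf k s
    rw [hstep, List.length_append]
    omega

lemma getElem?_iterate_applyW_eq_fixpt (hf : ∀ a, f a ≠ []) {a : Γ}
    (ha : (f a).head? = some a) (hlen : 1 < (f a).length) {l : List Γ}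
    (hl : l.head? = some a) (m : ℕ) :
    ((applyW f)^[m + 1] l)[m]? = some (fixpt f a m) := by
  obtain ⟨s, rfl⟩ := List.head?_eq_some_iff.mp hl
  have hm := lt_length_iterate_applyW hf ha hlen (m + 1)
  rw [← List.singleton_append, iterate_applyW_append, List.getElem?_append_left (by omega),
    fixpt, List.getD_eq_getElem?_getD, List.getElem?_eq_getElem (by omega), Option.getD_some]

end Morphism

section SimultaneousInduction

variable {Γ Δ ι S : Type*} {f : Γ → List Γ} {g : Δ → List Δ} {w : ι → List ι}
  {u : ι → List Γ} {v : ι → List Δ}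

lemma iterate_applyW_flatMap (hfu : ∀ i, applyW f (u i) = (w i).flatMap u) (k : ℕ)
    (W : List ι) : (applyW f)^[k] (W.flatMap u) = ((applyW w)^[k] W).flatMap u := by
  induction k generalizing W with
  | zero => rfl
  | succ k ih =>
    have hstep : applyW f (W.flatMap u) = (applyW w W).flatMap u := by
      simp only [applyW, List.flatMap_assoc, ← hfu]
    rw [Function.iterate_succ_apply, Function.iterate_succ_apply, hstep, ih]

lemma map_iterate_applyW_eq {τ : Γ → S} {ρ : Δ → S} (hcode : ∀ i, (u i).map τ = (v i).map ρ)
    (hfu : ∀ i, applyW f (u i) = (w i).flatMap u) (hgv : ∀ i, applyW g (v i) = (w i).flatMap v)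
    (k : ℕ) (i : ι) : ((applyW f)^[k] (u i)).map τ = ((applyW g)^[k] (v i)).map ρ := by
  rw [← List.flatMap_singleton u i, ← List.flatMap_singleton v i, iterate_applyW_flatMap hfu,
    iterate_applyW_flatMap hgv, List.map_flatMap, List.map_flatMap]
  simp only [hcode]

end SimultaneousInduction

theorem stmt_0_general {S : Type*} (nf ng : ℕ) [NeZero nf] [NeZero ng]
    (f : Fin nf → List (Fin nf)) (g : Fin ng → List (Fin ng))
    (hf : ∀ a, f a ≠ []) (hg : ∀ a, g a ≠ [])
    (hf0 : (f 0).head? = some 0) (hf0len : 1 < (f 0).length)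
    (hg0 : (g 0).head? = some 0) (hg0len : 1 < (g 0).length)
    (τ : Fin nf → S) (ρ : Fin ng → S)
    (n : ℕ) [NeZero n]
    (u : Fin n → List (Fin nf)) (v : Fin n → List (Fin ng)) (w : Fin n → List (Fin n))
    (hcode : ∀ i, (u i).map τ = (v i).map ρ)
    (hfu : ∀ i, applyW f (u i) = (w i).flatMap u)
    (hgv : ∀ i, applyW g (v i) = (w i).flatMap v)
    (hu0 : (u 0).head? = some 0) (hv0 : (v 0).head? = some 0) :
    applyC τ (fixpt f 0) = applyC ρ (fixpt g 0) := by
  funext m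
  have h := congrArg (·[m]?) (map_iterate_applyW_eq hcode hfu hgv (m + 1) 0)
  simpa only [applyC, List.getElem?_map, getElem?_iterate_applyW_eq_fixpt hf hf0 hf0len hu0,
    getElem?_iterate_applyW_eq_fixpt hg hg0 hg0len hv0, Option.map_some, Option.some.injEq] using h

/-- Theorem 2 (main theorem): the simultaneous-induction criterion implies
`τ(f^∞(0)) = ρ(g^∞(0))`. -/
theorem stmt_0 {S : Type*} (nf ng : ℕ) [NeZero nf] [NeZero ng]
    (f : Fin nf → List (Fin nf)) (g : Fin ng → List (Fin ng))
    (hf : ∀ a, f a ≠ []) (hg : ∀ a, g a ≠ [])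
    (hf0 : (f 0).head? = some 0) (hf0len : 1 < (f 0).length)
    (hg0 : (g 0).head? = some 0) (hg0len : 1 < (g 0).length)
    (τ : Fin nf → S) (ρ : Fin ng → S)
    (n : ℕ) [NeZero n]
    (u : Fin n → List (Fin nf)) (v : Fin n → List (Fin ng)) (w : Fin n → List (Fin n))
    (hu : ∀ i, u i ≠ []) (hv : ∀ i, v i ≠ [])
    (hcode : ∀ i, (u i).map τ = (v i).map ρ)
    (hfu : ∀ i, applyW f (u i) = (w i).flatMap u)
    (hgv : ∀ i, applyW g (v i) = (w i).flatMap v)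
    (hu0 : (u 0).head? = some 0) (hv0 : (v 0).head? = some 0) :
    applyC τ (fixpt f 0) = applyC ρ (fixpt g 0) :=
  stmt_0_general nf ng f g hf hg hf0 hf0len hg0 hg0len τ ρ n u v w hcode hfu hgv hu0 hv0
end

section
/- Let f be the morphism on {0,1} with f(0) = 01, f(1) = 101, let g be the morphism on {0,1,2} with g(0) = 021, g(1) = 102, g(2) = 02, and let ρ be the coding with ρ(0) = 0, ρ(1) = ρ(2) = 1. Then f^∞(0) = ρ(g^∞(0)). -/
/-! Both fixed points are images of the fixed point of `h : 0 ↦ 010, 1 ↦ 10`. With the morphisms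
`ψ : 0 ↦ 01, 1 ↦ 1` and `φ : 0 ↦ 02, 1 ↦ 1` one has `f ∘ ψ = ψ ∘ h`, `g ∘ φ = φ ∘ h` and
`ρ ∘ φ = ψ`, hence `f^(n+1)(0) = f^n(ψ 0) = ψ(h^n 0) = ρ(φ(h^n 0))`, while `φ(h^n 0) = g^n(02)`
is a prefix of `g^(n+1)(0) = g^n(02) g^n(1)`. As `h` at least doubles lengths, all these words
have length `> n`, so their `n`-th letters agree. -/

section Morphisms

variable {A B : Type*}

lemma applyW_iterate_append (f : A → List A) (n : ℕ) (u v : List A) :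
    (applyW f)^[n] (u ++ v) = (applyW f)^[n] u ++ (applyW f)^[n] v := by
  induction n generalizing u v with
  | zero => rfl
  | succ n ih => simp only [Function.iterate_succ_apply, applyW, List.flatMap_append, ih]

lemma semiconj_flatMap_applyW {σ : A → List B} {h : A → List A} {f : B → List B}
    (hσ : ∀ a, applyW f (σ a) = (h a).flatMap σ) :
    Function.Semiconj (List.flatMap σ) (applyW h) (applyW f) := by
  intro w
  induction w with
  | nil => rfl
  | cons a w ih => simp_all [applyW]

lemma mul_length_le_length_flatMap (σ : A → List B) {k : ℕ} (hσ : ∀ a, k ≤ (σ a).length)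
    (w : List A) : k * w.length ≤ (w.flatMap σ).length := by
  induction w with
  | nil => simp
  | cons a w ih =>
    rw [List.flatMap_cons, List.length_append, List.length_cons, Nat.mul_succ]
    have := hσ a
    omega

end Morphisms

namespace FixedPointCoding

def f : Fin 2 → List (Fin 2) := ![[0, 1], [1, 0, 1]]

def g : Fin 3 → List (Fin 3) := ![[0, 2, 1], [1, 0, 2], [0, 2]]

def ρ : Fin 3 → Fin 2 := ![0, 1, 1]

def h : Fin 2 → List (Fin 2) := ![[0, 1, 0], [1, 0]]

def ψ : Fin 2 → List (Fin 2) := ![[0, 1], [1]]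

def φ : Fin 2 → List (Fin 3) := ![[0, 2], [1]]

lemma f_comp_ψ (a : Fin 2) : applyW f (ψ a) = (h a).flatMap ψ := by
  fin_cases a <;> rfl

lemma g_comp_φ (a : Fin 2) : applyW g (φ a) = (h a).flatMap φ := by
  fin_cases a <;> rfl

lemma map_ρ_φ : (fun a => (φ a).map ρ) = ψ := by
  funext a
  fin_cases a <;> rfl

lemma iterate_f_zero (n : ℕ) :
    (applyW f)^[n + 1] [0] = ((applyW h)^[n] [0]).flatMap ψ :=
  ((semiconj_flatMap_applyW f_comp_ψ).iterate_right n [0]).symm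

lemma iterate_g_zero (n : ℕ) :
    (applyW g)^[n + 1] [0] = ((applyW h)^[n] [0]).flatMap φ ++ (applyW g)^[n] [1] := by
  rw [Function.iterate_succ_apply, show applyW g [0] = [0, 2] ++ [1] from rfl,
    applyW_iterate_append]
  exact congrArg (· ++ _) ((semiconj_flatMap_applyW g_comp_φ).iterate_right n [0]).symm

lemma lt_length_iterate_h (n : ℕ) : n < ((applyW h)^[n] [0]).length := by
  induction n with
  | zero => simp
  | succ n ih =>
    have := mul_length_le_length_flatMap h (k := 2) (by decide) ((applyW h)^[n] [0])
    rw [Function.iterate_succ_apply']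
    exact lt_of_lt_of_le (by omega) this

lemma fixpt_f_eq_applyC_fixpt_g : fixpt f 0 = applyC ρ (fixpt g 0) := by
  funext n
  set w := (applyW h)^[n] [0]
  have hlen : n < (w.flatMap φ).length :=
    lt_of_lt_of_le (lt_length_iterate_h n)
      (by simpa using mul_length_le_length_flatMap φ (k := 1) (by decide) w)
  calc fixpt f 0 n = ((w.flatMap φ).map ρ).getD n (ρ 0) := by
        rw [fixpt, iterate_f_zero, List.map_flatMap, map_ρ_φ]
        rfl
    _ = ρ ((w.flatMap φ).getD n 0) := List.getD_map ..
    _ = applyC ρ (fixpt g 0) n := by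
        rw [applyC, fixpt, iterate_g_zero, List.getD_append _ _ _ _ hlen]

end FixedPointCoding

/-- `f^∞(0) = ρ(g^∞(0))` for `f(0)=01, f(1)=101`, `g(0)=021, g(1)=102, g(2)=02`,
`ρ(0)=0, ρ(1)=ρ(2)=1`. -/
theorem stmt_11 :
    fixpt (![[0, 1], [1, 0, 1]] : Fin 2 → List (Fin 2)) 0 =
      applyC (![0, 1, 1] : Fin 3 → Fin 2)
        (fixpt (![[0, 2, 1], [1, 0, 2], [0, 2]] : Fin 3 → List (Fin 3)) 0) :=
  FixedPointCoding.fixpt_f_eq_applyC_fixpt_g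
end

section
/- Let f and g be the morphisms on {0,1,2} defined by f(0) = 01, f(1) = 21, f(2) = 2 and g(0) = 012, g(1) = 12, g(2) = 2. Then every nonempty word u over {0,1,2} that contains the letter 0 satisfies |f(u)| < |g(u)|. Consequently, there exist no nonempty words u_0, v_0 over {0,1,2}, both starting with 0, such that f^n(u_0) = g^n(v_0) for every n ≥ 0. -/
/-! Since `|g(a)| - |f(a)|` is `1, 0, 0` for `a = 0, 1, 2`, we get `|g(u)| - |f(u)| = |u|₀`.
Hence `f(u) ≠ g(u)` whenever `0 ∈ u`, so already `n = 0, 1` rule out `f^n(u₀) = g^n(v₀)`. -/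

theorem length_applyW {Γ : Type*} (f : Γ → List Γ) (w : List Γ) :
    (applyW f w).length = (w.map fun a => (f a).length).sum :=
  List.length_flatMap

theorem length_applyW_lt_of_mem {Γ : Type*} {f g : Γ → List Γ}
    (hle : ∀ a, (f a).length ≤ (g a).length) {w : List Γ} {a : Γ} (ha : a ∈ w)
    (hlt : (f a).length < (g a).length) :
    (applyW f w).length < (applyW g w).length := by
  rw [length_applyW, length_applyW]
  exact List.sum_lt_sum _ _ (fun b _ => hle b) ⟨a, ha, hlt⟩

theorem length_applyW_lt_of_zero_mem {u : List (Fin 3)} (hu : (0 : Fin 3) ∈ u) :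
    (applyW (![[0, 1], [2, 1], [2]] : Fin 3 → List (Fin 3)) u).length <
      (applyW (![[0, 1, 2], [1, 2], [2]] : Fin 3 → List (Fin 3)) u).length :=
  length_applyW_lt_of_mem (by decide) hu (by decide)

/-- For `f(0)=01, f(1)=21, f(2)=2` and `g(0)=012, g(1)=12, g(2)=2`:
every nonempty word `u` containing the letter `0` satisfies `|f(u)| < |g(u)|`;
consequently there are no nonempty words `u₀, v₀` both starting with `0` such
that `f^n(u₀) = g^n(v₀)` for all `n`. -/
theorem stmt_15 :
    (∀ u : List (Fin 3), u ≠ [] → (0 : Fin 3) ∈ u →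
      (applyW (![[0, 1], [2, 1], [2]] : Fin 3 → List (Fin 3)) u).length <
        (applyW (![[0, 1, 2], [1, 2], [2]] : Fin 3 → List (Fin 3)) u).length) ∧
    ¬ ∃ (u₀ v₀ : List (Fin 3)), u₀ ≠ [] ∧ v₀ ≠ [] ∧
        u₀.head? = some 0 ∧ v₀.head? = some 0 ∧
        ∀ n : ℕ, (applyW (![[0, 1], [2, 1], [2]] : Fin 3 → List (Fin 3)))^[n] u₀ =
          (applyW (![[0, 1, 2], [1, 2], [2]] : Fin 3 → List (Fin 3)))^[n] v₀ := by
  refine ⟨fun u _ hu => length_applyW_lt_of_zero_mem hu, ?_⟩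
  rintro ⟨u₀, v₀, -, -, hu₀, -, hiter⟩
  obtain rfl : u₀ = v₀ := hiter 0
  have hstep := congrArg List.length (hiter 1)
  exact (length_applyW_lt_of_zero_mem (List.mem_of_mem_head? hu₀)).ne hstep
end

section
/- Let f be the morphism on {0,1,2} with f(2) = 21, f(1) = 01, f(0) = 0 and let τ be the coding with τ(0) = 0, τ(1) = τ(2) = 1. Then the sequence τ(f^∞(2)) equals the sequence spir defined by spir(n) = 1 if n = k(k+1)/2 for some integer k ≥ 0, and spir(n) = 0 otherwise; i.e. spir = 1101001000100001⋯, consisting of infinitely many ones with the number of zeros between successive ones being 0,1,2,3,… respectively. In particular, spir is a morphic sequence. -/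
namespace Spiral

def triangle (k : ℕ) : ℕ := k * (k + 1) / 2

lemma triangle_succ (k : ℕ) : triangle (k + 1) = triangle k + k + 1 := by
  have h : (k + 1) * (k + 1 + 1) = k * (k + 1) + (k + 1) * 2 := by ring
  rw [triangle, triangle, h, Nat.add_mul_div_right _ _ two_pos]
  ring

lemma triangle_strictMono : StrictMono triangle :=
  strictMono_nat_of_lt_succ fun k => by rw [triangle_succ]; omega

lemma exists_triangle_eq_iff_of_lt {m p : ℕ} (hlo : triangle m < p) (hhi : p ≤ triangle (m + 1)) :
    (∃ k, p = triangle k) ↔ p = triangle (m + 1) := by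
  refine ⟨?_, fun h => ⟨m + 1, h⟩⟩
  rintro ⟨k, rfl⟩
  have hmk : m < k := triangle_strictMono.lt_iff_lt.mp hlo
  have hkm : k ≤ m + 1 := triangle_strictMono.le_iff_le.mp hhi
  rw [show k = m + 1 by omega]

abbrev spiralMorphism : Fin 3 → List (Fin 3) := ![[0], [0, 1], [2, 1]]

def block (m : ℕ) : List (Fin 3) := List.replicate m 0 ++ [1]

def spiralWord (m : ℕ) : List (Fin 3) := 2 :: (List.range m).flatMap block

lemma applyW_append {Γ : Type*} (f : Γ → List Γ) (v w : List Γ) :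
    applyW f (v ++ w) = applyW f v ++ applyW f w :=
  List.flatMap_append

lemma applyW_replicate_zero (m : ℕ) :
    applyW spiralMorphism (List.replicate m 0) = List.replicate m 0 := by
  simp [applyW, List.flatMap_replicate]

lemma applyW_block (m : ℕ) : applyW spiralMorphism (block m) = block (m + 1) := by
  rw [block, applyW_append, applyW_replicate_zero, block, List.replicate_succ']
  simp [applyW]

lemma applyW_spiralWord (m : ℕ) :
    applyW spiralMorphism (spiralWord m) = spiralWord (m + 1) := by
  have hblocks : applyW spiralMorphism ((List.range m).flatMap block)
      = (List.range m).flatMap fun j => block (j + 1) := by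
    simp only [applyW, List.flatMap_assoc]
    exact congrArg (List.flatMap · _) (funext applyW_block)
  rw [spiralWord, spiralWord, List.range_succ_eq_map, List.flatMap_cons, List.flatMap_map,
    ← List.singleton_append, applyW_append, hblocks]
  rfl

lemma iterate_applyW_spiralMorphism (m : ℕ) : (applyW spiralMorphism)^[m] [2] = spiralWord m := by
  induction m with
  | zero => rfl
  | succ m ih => rw [Function.iterate_succ_apply', ih, applyW_spiralWord]

lemma spiralWord_succ (m : ℕ) : spiralWord (m + 1) = spiralWord m ++ block m := by
  simp [spiralWord, List.range_succ]

lemma length_spiralWord (m : ℕ) : (spiralWord m).length = triangle m + 1 := by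
  induction m with
  | zero => rfl
  | succ m ih =>
    rw [spiralWord_succ, List.length_append, ih, triangle_succ, block]
    simp only [List.length_append, List.length_replicate, List.length_singleton]
    omega

lemma getD_block_ne_zero_iff {m q : ℕ} (hq : q ≤ m) (d : Fin 3) :
    (block m).getD q d ≠ 0 ↔ q = m := by
  rcases hq.lt_or_eq with hlt | rfl
  · rw [block, List.getD_append _ _ _ _ (by simpa using hlt), List.getD_replicate _ hlt]
    simp [hlt.ne]
  · rw [block, List.getD_append_right _ _ _ _ (by simp)]
    simp

lemma getD_spiralWord_ne_zero_iff (m : ℕ) {p : ℕ} (hp : p ≤ triangle m) (d : Fin 3) :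
    (spiralWord m).getD p d ≠ 0 ↔ ∃ k, p = triangle k := by
  induction m generalizing p with
  | zero =>
    obtain rfl : p = 0 := Nat.le_zero.mp hp
    exact ⟨fun _ => ⟨0, rfl⟩, fun _ => by simp [spiralWord]⟩
  | succ m ih =>
    rw [spiralWord_succ]
    rcases le_or_gt p (triangle m) with hle | hgt
    · rw [List.getD_append _ _ _ _ (by rw [length_spiralWord]; omega)]
      exact ih hle
    · rw [triangle_succ] at hp
      rw [List.getD_append_right _ _ _ _ (by rw [length_spiralWord]; omega), length_spiralWord,
        getD_block_ne_zero_iff (by omega),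
        exists_triangle_eq_iff_of_lt hgt (by rw [triangle_succ]; omega), triangle_succ]
      omega

lemma fixpt_spiralMorphism_ne_zero_iff (n : ℕ) :
    fixpt spiralMorphism 2 n ≠ 0 ↔ ∃ k, n = triangle k := by
  have hn : n ≤ triangle (n + 1) :=
    triangle_strictMono.id_le n |>.trans (triangle_strictMono.monotone n.le_succ)
  rw [fixpt, iterate_applyW_spiralMorphism]
  exact getD_spiralWord_ne_zero_iff (n + 1) hn 2

lemma fin_two_eq_of_eq_one_iff : ∀ {x y : Fin 2}, (x = 1 ↔ y = 1) → x = y := by decide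

end Spiral

/-- For `f(2)=21, f(1)=01, f(0)=0` and the coding `τ(0)=0, τ(1)=τ(2)=1`, the
sequence `τ(f^∞(2))` equals `spir`, where `spir(n) = 1` iff `n = k(k+1)/2`
for some `k ≥ 0` and `spir(n) = 0` otherwise; in particular `spir` is a
morphic sequence. -/
theorem stmt_16 (spir : ℕ → Fin 2)
    (hspir : ∀ n : ℕ, spir n = 1 ↔ ∃ k : ℕ, n = k * (k + 1) / 2) :
    applyC (![0, 1, 1] : Fin 3 → Fin 2)
        (fixpt (![[0], [0, 1], [2, 1]] : Fin 3 → List (Fin 3)) 2) = spir ∧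
      ∃ (m : ℕ) (f : Fin m → List (Fin m)) (a : Fin m) (u : List (Fin m))
        (τ : Fin m → Fin 2),
        (∀ b, f b ≠ []) ∧ u ≠ [] ∧ f a = a :: u ∧ spir = applyC τ (fixpt f a) := by
  have hcoding : ∀ x : Fin 3, (![0, 1, 1] : Fin 3 → Fin 2) x = 1 ↔ x ≠ 0 := by decide
  have hseq : applyC ![0, 1, 1] (fixpt Spiral.spiralMorphism 2) = spir := by
    funext n
    refine Spiral.fin_two_eq_of_eq_one_iff ?_
    rw [applyC, hcoding, Spiral.fixpt_spiralMorphism_ne_zero_iff, hspir]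
    rfl
  exact ⟨hseq, 3, Spiral.spiralMorphism, 2, [1], ![0, 1, 1], by decide, by simp, rfl, hseq.symm⟩
end

section
/- The sequence spir over {0,1}, defined by spir(n) = 1 if n = k(k+1)/2 for some integer k ≥ 0 and spir(n) = 0 otherwise, is not pure morphic: there is no morphism f : {0,1} → {0,1}⁺ with f(1) = 1·u for some nonempty word u such that spir = f^∞(1). -/
lemma Nat.triangle_succ_eq (k : ℕ) : (k + 1) * (k + 2) / 2 = k * (k + 1) / 2 + (k + 1) := by
  rw [show (k + 1) * (k + 2) = k * (k + 1) + 2 * (k + 1) by ring]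
  omega

lemma Nat.eq_zero_of_triangle_of_succ_triangle {n k l : ℕ} (hk : n = k * (k + 1) / 2)
    (hl : n + 1 = l * (l + 1) / 2) : n = 0 := by
  rcases le_or_gt l k with hlk | hkl
  · have : l * (l + 1) / 2 ≤ k * (k + 1) / 2 :=
      Nat.div_le_div_right (Nat.mul_le_mul hlk (by omega))
    omega
  · have : (k + 1) * (k + 2) / 2 ≤ l * (l + 1) / 2 :=
      Nat.div_le_div_right (Nat.mul_le_mul hkl (by omega))
    have hk0 : k = 0 := by rw [Nat.triangle_succ_eq] at this; omega
    simpa [hk0] using hk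

section Fixpoint

variable {Γ : Type*} {f : Γ → List Γ} {a : Γ} {u : List Γ}

lemma applyW_cons (f : Γ → List Γ) (b : Γ) (w : List Γ) :
    applyW f (b :: w) = f b ++ applyW f w :=
  List.flatMap_cons

lemma applyW_prefix (f : Γ → List Γ) {w w' : List Γ} (h : w <+: w') :
    applyW f w <+: applyW f w' := by
  obtain ⟨t, rfl⟩ := h
  exact ⟨applyW f t, (List.flatMap_append ..).symm⟩

lemma List.IsPrefix.getD_eq {w w' : List Γ} (h : w <+: w') {n : ℕ} (hn : n < w.length)
    (d : Γ) : w'.getD n d = w.getD n d := by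
  obtain ⟨t, rfl⟩ := h
  exact List.getD_append _ _ _ _ hn

lemma iterate_applyW_two (hfa : f a = a :: u) :
    (applyW f)^[2] [a] = f a ++ applyW f u := by
  simp [applyW, hfa]

lemma iterate_applyW_prefix_succ (hfa : f a = a :: u) (k : ℕ) :
    (applyW f)^[k] [a] <+: (applyW f)^[k + 1] [a] := by
  induction k with
  | zero => exact ⟨u, by simp [hfa, applyW]⟩
  | succ k ih =>
    simpa only [Function.iterate_succ_apply'] using applyW_prefix f ih

lemma iterate_applyW_prefix (hfa : f a = a :: u) {i j : ℕ} (hij : i ≤ j) :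
    (applyW f)^[i] [a] <+: (applyW f)^[j] [a] := by
  induction j, hij using Nat.le_induction with
  | base => exact List.prefix_refl _
  | succ j _ ih => exact ih.trans (iterate_applyW_prefix_succ hfa j)

lemma fixpt_eq_getD (hfa : f a = a :: u) {n k : ℕ} (hk : k ≤ n + 1)
    (hn : n < ((applyW f)^[k] [a]).length) :
    fixpt f a n = ((applyW f)^[k] [a]).getD n a :=
  (iterate_applyW_prefix hfa hk).getD_eq hn a

lemma fixpt_one (hfa : f a = a :: u) (hu : u ≠ []) : fixpt f a 1 = u.getD 0 a := by
  have hlen : 1 < (f a).length := by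
    rw [hfa, List.length_cons, Nat.lt_add_left_iff_pos, List.length_pos_iff]; exact hu
  rw [fixpt_eq_getD hfa (k := 1) (by norm_num) (by simpa [applyW] using hlen)]
  simp [applyW, hfa]

lemma fixpt_length_add (hfa : f a = a :: a :: u) {i : ℕ} (hi : i < (f a).length) :
    fixpt f a ((f a).length + i) = (f a).getD i a := by
  have hP2 := iterate_applyW_two hfa
  rw [applyW_cons, ← List.append_assoc] at hP2
  have hpre : f a ++ f a <+: (applyW f)^[2] [a] := hP2 ▸ List.prefix_append _ _
  have hlen : (f a).length + i < (f a ++ f a).length := by simpa using hi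
  rw [fixpt_eq_getD hfa (k := 2) (by omega) (hlen.trans_le hpre.length_le), hpre.getD_eq hlen,
    List.getD_append_right _ _ _ _ (Nat.le_add_right _ _), Nat.add_sub_cancel_left]

end Fixpoint

/-- `spir` is not pure morphic: there is no morphism `f` on `{0,1}` with
`f(1) = 1·u`, `u` nonempty, such that `spir = f^∞(1)`. -/
theorem stmt_17 (spir : ℕ → Fin 2)
    (hspir : ∀ n : ℕ, spir n = 1 ↔ ∃ k : ℕ, n = k * (k + 1) / 2) :
    ¬ ∃ (f : Fin 2 → List (Fin 2)) (u : List (Fin 2)),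
        (∀ b, f b ≠ []) ∧ u ≠ [] ∧ f 1 = 1 :: u ∧ spir = fixpt f 1 := by
  rintro ⟨f, u, -, hu, hf1, rfl⟩
  obtain ⟨v, rfl⟩ : ∃ v, u = 1 :: v := by
    have h1 := (hspir 1).mpr ⟨1, rfl⟩
    rw [fixpt_one hf1 hu] at h1
    obtain _ | ⟨c, v⟩ := u
    · exact absurd rfl hu
    · exact ⟨v, by simpa using h1⟩
  have hlen : 2 ≤ (f 1).length := by simp [hf1]
  have htri : ∀ i < 2, ∃ k, (f 1).length + i = k * (k + 1) / 2 := fun i hi =>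
    (hspir _).mp <| by
      rw [fixpt_length_add hf1 (by omega), hf1]
      interval_cases i <;> rfl
  obtain ⟨k, hk⟩ := htri 0 (by norm_num)
  obtain ⟨l, hl⟩ := htri 1 (by norm_num)
  have := Nat.eq_zero_of_triangle_of_succ_triangle hk hl
  omega
end
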